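/- arXiv:2305.00754 — 3 statements merged into one kernel-verified Lean document; each statement's English description precedes it below -/
import Mathlib

section
/- Let U ∈ ℝ^{I₁×R×I₃} be a tensor whose interpolatory projector P = U * (Sᵀ * U)⁻¹ * Sᵀ is well defined, where S = I(:, s, :) selects R distinct horizontal slice indices s and (Sᵀ*U)⁻¹ denotes the t-product inverse. Then for any tensor G ∈ ℝ^{I₁×I₂×I₃} and X = P * G, the horizontal slices of X indexed by s equal those of G: X(s,:,:) = G(s,:,:). -/
open scoped BigOperators
open Matrix

/-- A third-order real tensor of size a × b × n; the third (tube) mode is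
indexed by `ZMod n` so that the circular structure of the t-product is built in
(index k corresponds to frontal slice k+1 of the paper). -/
abbrev Tensor3 (a b n : ℕ) : Type := Fin a → Fin b → ZMod n → ℝ

/-- The t-product X * Y = fold(circ(X) · unfold(Y)). -/
def tmul {a b c n : ℕ} [NeZero n] (X : Tensor3 a b n) (Y : Tensor3 b c n) :
    Tensor3 a c n :=
  fun i j k => ∑ l : Fin b, ∑ m : ZMod n, X i l (k - m) * Y l j m

/-- The identity tensor: first frontal slice the identity matrix, rest zero. -/
def tId (a n : ℕ) : Tensor3 a a n := fun i j k => if i = j ∧ k = 0 then 1 else 0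

/-- The tensor transpose: transpose every frontal slice and reverse the order
of the transposed slices 2 through n. -/
def tTr {a b n : ℕ} (X : Tensor3 a b n) : Tensor3 b a n := fun i j k => X j i (-k)

/-- The four Penrose equations for the Moore-Penrose pseudoinverse of a tensor
under the t-product (Definition 6 of the paper). -/
def tIsMP {a b n : ℕ} [NeZero n] (X : Tensor3 a b n) (B : Tensor3 b a n) : Prop :=
  tmul X (tmul B X) = X ∧ tmul B (tmul X B) = B ∧
    tTr (tmul X B) = tmul X B ∧ tTr (tmul B X) = tmul B X


def circ {a b n : ℕ} [NeZero n] (X : Tensor3 a b n) :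
    Matrix (Fin a × ZMod n) (Fin b × ZMod n) ℝ :=
  fun p q => X p.1 q.1 (p.2 - q.2)

lemma circ_inj {a b n : ℕ} [NeZero n] : Function.Injective (circ (a:=a) (b:=b) (n:=n)) := by
  intro X Y h
  funext i j k
  have := congrFun (congrFun h (i, k)) (j, 0)
  simpa [circ] using this

lemma circ_tmul {a b c n : ℕ} [NeZero n] (X : Tensor3 a b n) (Y : Tensor3 b c n) :
    circ (tmul X Y) = circ X * circ Y := by
  funext p q
  simp only [circ, tmul, Matrix.mul_apply, Fintype.sum_prod_type]
  refine Finset.sum_congr rfl fun l _ => ?_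
  refine Fintype.sum_equiv (Equiv.addRight q.2) _ _ fun m => ?_
  simp [Equiv.addRight, sub_add_eq_sub_sub, sub_right_comm]

lemma circ_tId {a n : ℕ} [NeZero n] : circ (tId a n) = (1 : Matrix (Fin a × ZMod n) (Fin a × ZMod n) ℝ) := by
  funext p q
  simp [circ, tId, Matrix.one_apply, Prod.ext_iff, sub_eq_zero]

lemma tmul_assoc {a b c d n : ℕ} [NeZero n] (X : Tensor3 a b n) (Y : Tensor3 b c n)
    (Z : Tensor3 c d n) : tmul (tmul X Y) Z = tmul X (tmul Y Z) := by
  apply circ_inj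
  simp [circ_tmul, Matrix.mul_assoc]

lemma tId_tmul {a b n : ℕ} [NeZero n] (X : Tensor3 a b n) : tmul (tId a n) X = X := by
  apply circ_inj
  simp [circ_tmul, circ_tId]

lemma sel_tmul {I₁ R b n : ℕ} [NeZero n] (s : Fin R → Fin I₁)
    (S : Tensor3 I₁ R n)
    (hS : S = fun i r k => if i = s r ∧ k = 0 then 1 else 0)
    (M : Tensor3 I₁ b n) (r : Fin R) (j : Fin b) (k : ZMod n) :
    tmul (tTr S) M r j k = M (s r) j k := by
  subst hS
  simp only [tmul, tTr, neg_sub, sub_eq_zero, ite_mul, one_mul, zero_mul]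
  rw [Finset.sum_eq_single (s r)]
  · simp
  · intro i _ hi
    simp [hi]
  · simp

/-- Interpolation property of the tensorial oblique (DEIM) projector:
P = U * (Sᵀ*U)⁻¹ * Sᵀ preserves the horizontal slices indexed by s. -/
theorem stmt13 {I₁ I₂ I₃ R : ℕ} [NeZero I₃]
    (U : Tensor3 I₁ R I₃)
    (s : Fin R → Fin I₁) (hs : Function.Injective s)
    (S : Tensor3 I₁ R I₃)
    (hS : S = fun i r k => if i = s r ∧ k = 0 then 1 else 0)
    (W : Tensor3 R R I₃)
    (hW1 : tmul (tmul (tTr S) U) W = tId R I₃)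
    (hW2 : tmul W (tmul (tTr S) U) = tId R I₃)
    (P : Tensor3 I₁ I₁ I₃)
    (hP : P = tmul U (tmul W (tTr S)))
    (G X : Tensor3 I₁ I₂ I₃) (hX : X = tmul P G) :
    ∀ (r : Fin R) (j : Fin I₂) (k : ZMod I₃), X (s r) j k = G (s r) j k := by
  have h0 : tmul (tTr S) (tmul U (tmul W (tTr S))) = tTr S := by
    rw [← tmul_assoc, ← tmul_assoc, hW1, tId_tmul]
  have e1 : tmul (tTr S) X = tmul (tTr S) G := by
    rw [hX, hP, ← tmul_assoc, h0]
  intro r j k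
  rw [← sel_tmul s S hS X r j k, ← sel_tmul s S hS G r j k, e1]
end

section
/- Let X ∈ ℝ^{I₁×I₂×I₃} and X̂ = fft(X, [], 3) be its slice-wise Fourier transform along the third mode. If B̂(:,:,k) is the (matrix) Moore–Penrose pseudoinverse of X̂(:,:,k) for each k = 1,…,I₃, then B = ifft(B̂, [], 3) is the Moore–Penrose pseudoinverse of X with respect to the t-product, i.e., B satisfies the four tensor Penrose equations. -/
open scoped BigOperators
open Matrix

/-- The (unnormalized) discrete Fourier transform of a tube, with
ω = exp(−2πi/n): (dft x) k = Σ_m x_m ω^{k·m}. -/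
noncomputable def dft (n : ℕ) [NeZero n] (x : ZMod n → ℝ) (k : ZMod n) : ℂ :=
  ∑ m : ZMod n, (x m : ℂ) * Complex.exp (-(2 * Real.pi * Complex.I) / n) ^ (k.val * m.val)

/-- The k-th frontal slice of fft(X,[],3): the DFT along every tube. -/
noncomputable def dftSlice {a b n : ℕ} [NeZero n] (X : Tensor3 a b n) (k : ZMod n) :
    Matrix (Fin a) (Fin b) ℂ := fun i j => dft n (X i j) k

/-- The four Penrose equations characterizing the matrix Moore-Penrose
pseudoinverse. -/
def Matrix.IsMoorePenrose {m n : Type*} [Fintype m] [Fintype n] {R : Type*}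
    [Field R] [StarRing R] (A : Matrix m n R) (B : Matrix n m R) : Prop :=
  A * B * A = A ∧ B * A * B = B ∧ (A * B)ᴴ = A * B ∧ (B * A)ᴴ = B * A

/-! The DFT along tubes turns the circular convolution in the third mode that defines the
t-product into slice-wise matrix products, and the tube reversal `k ↦ -k` of the tensor transpose
into conjugate transposition of the slices. Since the DFT is injective, each tensor Penrose
equation follows from the corresponding matrix Penrose equation in every Fourier slice. -/

open scoped ZMod

namespace ZMod

variable {N : ℕ} [NeZero N] {l m p : Type*}

theorem stdAddChar_neg_mul (j k : ZMod N) :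
    stdAddChar (-(j * k)) = Complex.exp (-(2 * Real.pi * Complex.I) / N) ^ (k.val * j.val) := by
  have hjk : -(j * k) = ((-(k.val * j.val : ℕ) : ℤ) : ZMod N) := by
    push_cast
    rw [natCast_zmod_val, natCast_zmod_val, mul_comm]
  rw [hjk, stdAddChar_coe, ← Complex.exp_nat_mul]
  congr 1
  push_cast
  ring

theorem dft_sum_sub_mul [Fintype m] (Φ : ZMod N → Matrix l m ℂ) (Ψ : ZMod N → Matrix m p ℂ)
    (k : ZMod N) :
    𝓕 (fun s => ∑ j, Φ (s - j) * Ψ j) k = 𝓕 Φ k * 𝓕 Ψ k := by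
  simp only [dft_apply, Finset.smul_sum, Matrix.sum_mul, Matrix.mul_sum, Matrix.smul_mul,
    Matrix.mul_smul, smul_smul]
  rw [Finset.sum_comm]
  refine Finset.sum_congr rfl fun j _ => ?_
  refine Fintype.sum_equiv (Equiv.subRight j) _ _ fun s => ?_
  rw [Equiv.subRight_apply, ← AddChar.map_add_eq_mul]
  congr 2
  ring

theorem dft_conjTranspose_neg (Φ : ZMod N → Matrix l m ℂ) (k : ZMod N) :
    𝓕 (fun j => (Φ (-j))ᴴ) k = (𝓕 Φ k)ᴴ := by
  rw [dft_apply, dft_apply, Matrix.conjTranspose_sum]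
  refine Fintype.sum_equiv (Equiv.neg _) _ _ fun j => ?_
  rw [Equiv.neg_apply, Matrix.conjTranspose_smul, AddChar.map_neg_eq_conj, neg_mul, neg_neg]
  rfl

end ZMod

section Tensor

variable {a b c n : ℕ}

def frontalSlice (X : Tensor3 a b n) (k : ZMod n) : Matrix (Fin a) (Fin b) ℂ :=
  fun i j => X i j k

theorem frontalSlice_injective : Function.Injective (frontalSlice : Tensor3 a b n → _) := by
  intro X Y h
  funext i j k
  exact Complex.ofReal_injective (congrFun (congrFun (congrFun h k) i) j)

theorem frontalSlice_tmul [NeZero n] (X : Tensor3 a b n) (Y : Tensor3 b c n) (k : ZMod n) :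
    frontalSlice (tmul X Y) k = ∑ m, frontalSlice X (k - m) * frontalSlice Y m := by
  ext i j
  simp only [frontalSlice, tmul, Matrix.sum_apply, Matrix.mul_apply]
  push_cast
  exact Finset.sum_comm

theorem frontalSlice_tTr (X : Tensor3 a b n) (k : ZMod n) :
    frontalSlice (tTr X) k = (frontalSlice X (-k))ᴴ := by
  ext i j
  simp [frontalSlice, tTr]

theorem dftSlice_eq_dft_frontalSlice [NeZero n] (X : Tensor3 a b n) :
    dftSlice X = 𝓕 (frontalSlice X) := by
  ext k i j
  simp only [dftSlice, dft, ZMod.dft_apply, Matrix.sum_apply, Matrix.smul_apply, smul_eq_mul,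
    frontalSlice, ZMod.stdAddChar_neg_mul, mul_comm]

theorem dftSlice_injective [NeZero n] : Function.Injective (dftSlice : Tensor3 a b n → _) := by
  intro X Y h
  simp only [dftSlice_eq_dft_frontalSlice] at h
  exact frontalSlice_injective (ZMod.dft.injective h)

theorem dftSlice_tmul [NeZero n] (X : Tensor3 a b n) (Y : Tensor3 b c n) (k : ZMod n) :
    dftSlice (tmul X Y) k = dftSlice X k * dftSlice Y k := by
  simp only [dftSlice_eq_dft_frontalSlice, funext (frontalSlice_tmul X Y), ZMod.dft_sum_sub_mul]

theorem dftSlice_tTr [NeZero n] (X : Tensor3 a b n) (k : ZMod n) :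
    dftSlice (tTr X) k = (dftSlice X k)ᴴ := by
  simp only [dftSlice_eq_dft_frontalSlice, funext (frontalSlice_tTr X),
    ZMod.dft_conjTranspose_neg]

end Tensor

/-- Slice-wise Moore-Penrose pseudoinverses in the Fourier domain yield the
tensor Moore-Penrose pseudoinverse under the t-product (Algorithm 2). -/
theorem stmt15 {I₁ I₂ I₃ : ℕ} [NeZero I₃]
    (X : Tensor3 I₁ I₂ I₃) (B : Tensor3 I₂ I₁ I₃)
    (h : ∀ k : ZMod I₃, Matrix.IsMoorePenrose (dftSlice X k) (dftSlice B k)) :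
    tIsMP X B := by
  refine ⟨?_, ?_, ?_, ?_⟩ <;> refine dftSlice_injective (funext fun k => ?_)
  · simpa only [dftSlice_tmul, ← Matrix.mul_assoc] using (h k).1
  · simpa only [dftSlice_tmul, ← Matrix.mul_assoc] using (h k).2.1
  · simpa only [dftSlice_tTr, dftSlice_tmul] using (h k).2.2.1
  · simpa only [dftSlice_tTr, dftSlice_tmul] using (h k).2.2.2
end

section
/- For tensors X ∈ ℝ^{I₁×I₂×I₃} and Y ∈ ℝ^{I₂×I₄×I₃}, with X̂ = fft(X,[],3) and Ŷ = fft(Y,[],3), the t-product satisfies fft(X * Y, [], 3)(:,:,k) = X̂(:,:,k) · Ŷ(:,:,k) for every k = 1,…,I₃; i.e., the t-product becomes slice-wise matrix multiplication in the Fourier domain. -/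
open scoped BigOperators
open Matrix

/-! Each entry of a slice of `tmul X Y` is a sum over `l` of cyclic convolutions of tubes of `X`
and `Y`. Since `ζ = dftRoot n ^ k.val` satisfies `ζ ^ n = 1`, the map `m ↦ ζ ^ m.val` is multiplicative on
`ZMod n`, so evaluating a cyclic convolution against it gives the product of the evaluations. -/

lemma pow_val_add_of_pow_eq_one {M : Type*} [Monoid M] {n : ℕ} [NeZero n] {ζ : M}
    (hζ : ζ ^ n = 1) (a b : ZMod n) : ζ ^ (a + b).val = ζ ^ a.val * ζ ^ b.val := by
  rw [ZMod.val_add, ← pow_eq_pow_mod _ hζ, pow_add]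

lemma sum_cyclicConv_mul_pow_val {R : Type*} [CommSemiring R] {n : ℕ} [NeZero n]
    {ζ : R} (hζ : ζ ^ n = 1) (f g : ZMod n → R) :
    ∑ k, (∑ m, f (k - m) * g m) * ζ ^ k.val
      = (∑ k, f k * ζ ^ k.val) * ∑ m, g m * ζ ^ m.val := by
  simp only [Finset.sum_mul, Finset.mul_sum]
  rw [Finset.sum_comm]
  refine Finset.sum_congr rfl fun m _ => ?_
  refine Fintype.sum_equiv (Equiv.subRight m) _ _ fun k => ?_
  conv_lhs => rw [← sub_add_cancel k m]
  rw [Equiv.subRight_apply, add_sub_cancel_right, pow_val_add_of_pow_eq_one hζ]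
  ring

noncomputable def dftRoot (n : ℕ) : ℂ := Complex.exp (-(2 * Real.pi * Complex.I) / n)

lemma dftRoot_pow_self (n : ℕ) [NeZero n] : dftRoot n ^ n = 1 := by
  rw [dftRoot, neg_div, Complex.exp_neg, inv_pow,
    (Complex.isPrimitiveRoot_exp n (NeZero.ne n)).pow_eq_one, inv_one]

lemma dft_eq_sum_mul_pow_val (n : ℕ) [NeZero n] (x : ZMod n → ℝ) (k : ZMod n) :
    dft n x k = ∑ m, (x m : ℂ) * (dftRoot n ^ k.val) ^ m.val := by
  simp only [dft, dftRoot, pow_mul]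

/-- The t-product becomes slice-wise matrix multiplication in the Fourier
domain. -/
theorem stmt19 {I₁ I₂ I₄ I₃ : ℕ} [NeZero I₃]
    (X : Tensor3 I₁ I₂ I₃) (Y : Tensor3 I₂ I₄ I₃) :
    ∀ k : ZMod I₃, dftSlice (tmul X Y) k = dftSlice X k * dftSlice Y k := by
  intro k
  have hζ : (dftRoot I₃ ^ k.val) ^ I₃ = 1 := by
    rw [pow_right_comm, dftRoot_pow_self, one_pow]
  ext i j
  have conv (l : Fin I₂) :=
    sum_cyclicConv_mul_pow_val hζ (fun m => (X i l m : ℂ)) (fun m => (Y l j m : ℂ))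
  simp only [dftSlice, dft_eq_sum_mul_pow_val, Matrix.mul_apply, ← conv, tmul]
  push_cast
  simp only [Finset.sum_mul]
  exact Finset.sum_comm
end
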